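/- arXiv:2305.05876 — 3 statements merged into one kernel-verified Lean document; each statement's English description precedes it below -/
import Mathlib

section
/- Let Σ be a compact oriented surface, μ a Borel probability measure on Σ, φ ∈ Homeo_0(Σ, μ), and Φ an identity isotopy of φ. Then under the homeomorphism η: (ℝ/ℤ) × Σ → M_φ, [(t, p)] ↦ [(t, φ_t^{-1}(p))], the asymptotic cycle satisfies η^*·C(φ, μ) = [𝕋] + F(Φ, μ) in H_1((ℝ/ℤ) × Σ; ℝ), where [𝕋] is the class of the circle factor. -/
open MeasureTheory Set Function Filter

noncomputable section

/-- The circle `𝕋 = ℝ/ℤ`. -/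
abbrev Circ : Type := AddCircle (1 : ℝ)

variable {X : Type*} [TopologicalSpace X]

/-- An identity isotopy of a homeomorphism `φ`: a continuous path `t ↦ φₜ` of
homeomorphisms (continuous, together with the inverses, in the `C⁰` sense)
with `φ₀ = id` and `φ₁ = φ`. -/
structure IdentityIsotopy (φ : X ≃ₜ X) where
  φt : ℝ → X ≃ₜ X
  continuous_toFun : Continuous fun p : ℝ × X => φt p.1 p.2
  continuous_invFun : Continuous fun p : ℝ × X => (φt p.1).symm p.2
  map_zero : φt 0 = Homeomorph.refl X
  map_one : φt 1 = φ

/-- `g : X → ℝ` is the real-valued lift of the circle-valued function `f ∘ φ − f`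
determined by the identity isotopy `Φ`: it is the endpoint of a continuous family of
real-valued lifts of `f ∘ φₜ − f` starting at `0`. -/
def IsRotationLift {φ : X ≃ₜ X} (Φ : IdentityIsotopy φ) (f : C(X, Circ)) (g : X → ℝ) : Prop :=
  ∃ G : ℝ × X → ℝ, Continuous G ∧ (∀ x, G (0, x) = 0) ∧
    (∀ t x, ((G (t, x) : ℝ) : Circ) = f (Φ.φt t x) - f x) ∧ ∀ x, g x = G (1, x)

/-- `RotPair Φ μ f r` says that the pairing `⟨F(Φ, μ), [f]⟩` of the rotation vector
`F(Φ, μ) ∈ H₁(X; ℝ) ≅ Hom([X, ℝ/ℤ], ℝ)` of the `φ`-invariant measure `μ` with the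
cohomology class of `f : X → ℝ/ℤ` equals `r`, i.e. `∫ g dμ = r` for the lift `g` of
`f ∘ φ − f` determined by `Φ`. -/
def RotPair [MeasurableSpace X] {φ : X ≃ₜ X} (Φ : IdentityIsotopy φ) (μ : Measure X)
    (f : C(X, Circ)) (r : ℝ) : Prop :=
  ∃ g : X → ℝ, IsRotationLift Φ f g ∧ ∫ x, g x ∂μ = r

/-- The mapping-torus identification on `ℝ × X`: `(t, x) ∼ (t − n, eⁿ x)` for `n : ℤ`
(so in particular `(1, x) ∼ (0, e x)`), where `e` is the underlying bijection of the
homeomorphism. -/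
def mtRel {X : Type*} (e : Equiv.Perm X) (p q : ℝ × X) : Prop :=
  ∃ n : ℤ, q.1 = p.1 - n ∧ q.2 = (e ^ n) p.2

/-- The mapping torus `M_φ`: the quotient of `ℝ × X` by `(1, x) ∼ (0, e x)`, with the
quotient topology. -/
def MappingTorus {X : Type*} [TopologicalSpace X] (e : Equiv.Perm X) : Type _ :=
  Quot (mtRel e)

instance {X : Type*} [TopologicalSpace X] (e : Equiv.Perm X) :
    TopologicalSpace (MappingTorus e) :=
  inferInstanceAs (TopologicalSpace (Quot (mtRel e)))

instance {X : Type*} [TopologicalSpace X] (e : Equiv.Perm X) :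
    MeasurableSpace (MappingTorus e) := borel _

instance {X : Type*} [TopologicalSpace X] (e : Equiv.Perm X) :
    BorelSpace (MappingTorus e) := ⟨rfl⟩

/-- The canonical projection `ℝ × X → M_φ`. -/
def mtMk {X : Type*} [TopologicalSpace X] (e : Equiv.Perm X) : ℝ × X → MappingTorus e :=
  Quot.mk (mtRel e)

/-- The suspension flow `ψ^s [(t, x)] = [(t + s, x)]` on the mapping torus. -/
def suspFlow {X : Type*} [TopologicalSpace X] (e : Equiv.Perm X) (s : ℝ) :
    MappingTorus e → MappingTorus e :=
  Quot.map (fun p => (p.1 + s, p.2)) (by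
    rintro ⟨t, x⟩ ⟨t', y⟩ ⟨n, h1, h2⟩
    exact ⟨n, by simp only at h1 h2 ⊢; rw [h1]; ring, h2⟩)

/-- The measure `dt ⊗ μ` on the mapping torus: the pushforward of the product of
Lebesgue measure on `[0,1)` with `μ` under the canonical projection. -/
def mtMeasure {X : Type*} [TopologicalSpace X] (e : Equiv.Perm X) [MeasurableSpace X]
    (μ : Measure X) : Measure (MappingTorus e) :=
  Measure.map (mtMk e) ((volume.restrict (Ico (0 : ℝ) 1)).prod μ)

/-- `AsympPair e μ f r` says that the pairing `⟨C(φ, μ), [f]⟩` of Schwartzman's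
asymptotic cycle `C(φ, μ) ∈ H₁(M_φ; ℝ) ≅ Hom([M_φ, ℝ/ℤ], ℝ)` with the class of
`f : M_φ → ℝ/ℤ` equals `r`: there is a continuous family `G (s, ·)` of real-valued
lifts of `f ∘ ψ^s − f` with `G (0, ·) = 0` such that `(∫ G (s, ·) d(dt ⊗ μ)) / s → r`
as `s → ∞` (by Kingman's subadditive ergodic theorem this limit is the integral of
`G = lim g_s / s` against `dt ⊗ μ`). -/
def AsympPair {X : Type*} [TopologicalSpace X] (e : Equiv.Perm X) [MeasurableSpace X]
    (μ : Measure X) (f : C(MappingTorus e, Circ)) (r : ℝ) : Prop :=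
  ∃ G : ℝ × MappingTorus e → ℝ, Continuous G ∧ (∀ m, G (0, m) = 0) ∧
    (∀ s m, ((G (s, m) : ℝ) : Circ) = f (suspFlow e s m) - f m) ∧
    Tendsto (fun s : ℝ => (∫ m, G (s, m) ∂(mtMeasure e μ)) / s) atTop (nhds r)

/-- The circle map `f : ℝ/ℤ → ℝ/ℤ` has degree `d`. -/
def HasCircleDegree (f : Circ → Circ) (d : ℤ) : Prop :=
  ∃ L : ℝ → ℝ, Continuous L ∧ (∀ t : ℝ, ((L t : ℝ) : Circ) = f (t : ℝ)) ∧ L 1 = L 0 + d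

/-!
Real lifts of circle-valued maps along `ℝ → ℝ/ℤ` are determined by their value at one point of a
connected domain. Hence the lifts `G (s, ·)` of `h ∘ ψ^s − h` form an additive cocycle over the
suspension flow. On the fundamental domain `[0, 1) × S` the time-one map of the flow is
`(t, x) ↦ (t, φ x)`, which preserves `dt ⊗ μ`, so `∫ G (n, ·) = n ∫ G (1, ·)` and the asymptotic
cycle pairs `h` to `∫ G (1, ·)`. The cocycle identity moves `G (1, [t, x])` to the slice `t = 0`
up to the coboundary `G (t, [0, φ x]) − G (t, [0, x])`, which integrates to zero. On that slice
`h ∘ η = f` shows that `G (1, [0, x])` and the rotation lift of `f (0, ·)` at `x` differ by the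
lift of the loop `f (·, y)` around the circle factor, that is, by its degree `d`.
-/

theorem Circ.coe_intCast (n : ℤ) : ((n : ℝ) : Circ) = 0 :=
  (AddCircle.coe_eq_zero_iff _).mpr ⟨n, by simp⟩

theorem Circ.eq_of_coe_eq {Z : Type*} [TopologicalSpace Z] [PreconnectedSpace Z] {F₁ F₂ : Z → ℝ}
    (h₁ : Continuous F₁) (h₂ : Continuous F₂) (he : ∀ z, (F₁ z : Circ) = F₂ z) {z₀ : Z}
    (h₀ : F₁ z₀ = F₂ z₀) : F₁ = F₂ :=
  (AddCircle.isCoveringMap_coe 1).eq_of_comp_eq h₁ h₂ (funext he) z₀ h₀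

theorem Circ.eqOn_of_coe_eqOn {Z : Type*} [TopologicalSpace Z] {s : Set Z} {F₁ F₂ : Z → ℝ}
    (hs : IsPreconnected s) (h₁ : ContinuousOn F₁ s) (h₂ : ContinuousOn F₂ s)
    (he : ∀ z ∈ s, (F₁ z : Circ) = F₂ z) {z₀ : Z} (hz₀ : z₀ ∈ s) (h₀ : F₁ z₀ = F₂ z₀) :
    EqOn F₁ F₂ s :=
  (AddCircle.isCoveringMap_coe 1).eqOn_of_comp_eqOn hs h₁ h₂ he hz₀ h₀

theorem integrable_prod_restrict_Ico {Y : Type*} [TopologicalSpace Y] [CompactSpace Y]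
    [MeasurableSpace Y] [OpensMeasurableSpace Y] (μ : Measure Y) [IsFiniteMeasure μ]
    {F : ℝ × Y → ℝ} (hF : Continuous F) (a b : ℝ) :
    Integrable F ((volume.restrict (Ico a b)).prod μ) := by
  rw [← μ.restrict_univ, Measure.prod_restrict]
  exact hF.continuousOn.integrableOn_of_subset_isCompact (isCompact_Icc.prod isCompact_univ)
    (measurableSet_Ico.prod MeasurableSet.univ) (prod_mono Ico_subset_Icc_self subset_rfl)
    (by simp [Measure.prod_prod, ENNReal.mul_ne_top, measure_ne_top])

theorem integral_comp_prodMap_id {α Y : Type*} [MeasurableSpace α] [MeasurableSpace Y]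
    {ν : Measure α} [SFinite ν] {μ : Measure Y} [SFinite μ] {e : Y → Y}
    (he : MeasurePreserving e μ μ) {F : α × Y → ℝ} (hF : AEStronglyMeasurable F (ν.prod μ)) :
    ∫ p, F (p.1, e p.2) ∂(ν.prod μ) = ∫ p, F p ∂(ν.prod μ) := by
  have h := (MeasurePreserving.id ν).prod he
  conv_rhs => rw [← h.map_eq]
  exact (integral_map h.measurable.aemeasurable (by rwa [h.map_eq])).symm

theorem MeasureTheory.Integrable.comp_prodMap_id {α Y : Type*} [MeasurableSpace α]
    [MeasurableSpace Y]
    {ν : Measure α} [SFinite ν] {μ : Measure Y} [SFinite μ] {e : Y → Y}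
    (he : MeasurePreserving e μ μ) {F : α × Y → ℝ} (hF : Integrable F (ν.prod μ)) :
    Integrable (fun p => F (p.1, e p.2)) (ν.prod μ) :=
  ((MeasurePreserving.id ν).prod he).integrable_comp_of_integrable hF

theorem IsRotationLift.continuous {φ : X ≃ₜ X} {Φ : IdentityIsotopy φ} {f : C(X, Circ)}
    {g : X → ℝ} (hg : IsRotationLift Φ f g) : Continuous g := by
  obtain ⟨G, hGc, -, -, hgG⟩ := hg
  rw [funext hgG]
  fun_prop

section MappingTorus

variable (e : Equiv.Perm X)

theorem mtMk_add_one (t : ℝ) (x : X) : mtMk e (t + 1, x) = mtMk e (t, e x) :=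
  Quot.sound ⟨1, by simp, by simp⟩

@[simp]
theorem suspFlow_mtMk (s t : ℝ) (x : X) : suspFlow e s (mtMk e (t, x)) = mtMk e (t + s, x) :=
  rfl

@[fun_prop]
theorem continuous_mtMk : Continuous (mtMk e) :=
  continuous_quot_mk

theorem integral_mtMeasure [MeasurableSpace X] [OpensMeasurableSpace X] (μ : Measure X)
    {F : MappingTorus e → ℝ} (hF : Continuous F) :
    ∫ m, F m ∂mtMeasure e μ = ∫ p, F (mtMk e p) ∂((volume.restrict (Ico 0 1)).prod μ) :=
  integral_map (continuous_mtMk e).aemeasurable hF.aestronglyMeasurable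

/-- `G (s, ·)` is the family `g_s` of the paper. -/
def IsSuspensionLift (k : C(MappingTorus e, Circ)) (G : ℝ × MappingTorus e → ℝ) : Prop :=
  Continuous G ∧ (∀ m, G (0, m) = 0) ∧ ∀ s m, (G (s, m) : Circ) = k (suspFlow e s m) - k m

namespace IsSuspensionLift

variable {e} {k : C(MappingTorus e, Circ)} {G : ℝ × MappingTorus e → ℝ}

theorem add_mtMk (hG : IsSuspensionLift e k G) (a b t : ℝ) (x : X) :
    G (a + b, mtMk e (t, x)) = G (b, mtMk e (t, x)) + G (a, mtMk e (t + b, x)) := by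
  obtain ⟨hGc, hG0, hGk⟩ := hG
  have := Circ.eq_of_coe_eq (z₀ := ((0 : ℝ), (0 : ℝ)))
    (F₁ := fun q : ℝ × ℝ => G (q.1 + q.2, mtMk e (t, x)))
    (F₂ := fun q => G (q.2, mtMk e (t, x)) + G (q.1, mtMk e (t + q.2, x)))
    (by fun_prop) (by fun_prop) (fun q => by
      rw [AddCircle.coe_add, hGk, hGk, hGk]
      simp only [suspFlow_mtMk, add_assoc, add_comm q.1 q.2]
      abel) (by simp [hG0])
  exact congrFun this (a, b)

theorem one_mtMk (hG : IsSuspensionLift e k G) (t : ℝ) (x : X) :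
    G (1, mtMk e (t, x)) =
      G (1, mtMk e (0, x)) + G (t, mtMk e (0, e x)) - G (t, mtMk e (0, x)) := by
  have h₁ := hG.add_mtMk 1 t 0 x
  have h₂ := hG.add_mtMk t 1 0 x
  rw [zero_add] at h₁
  rw [mtMk_add_one, add_comm t 1] at h₂
  linarith

section Integral

variable [CompactSpace X] [MeasurableSpace X] [OpensMeasurableSpace X] {μ : Measure X}
  [IsFiniteMeasure μ]

theorem integral_natCast_eq_mul (hG : IsSuspensionLift e k G) (he : MeasurePreserving e μ μ)
    (n : ℕ) :
    ∫ m, G (n, m) ∂mtMeasure e μ = n * ∫ m, G (1, m) ∂mtMeasure e μ := by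
  have hGc := hG.1
  induction n with
  | zero => simp [hG.2.1]
  | succ n ih =>
    rw [integral_mtMeasure e μ (by fun_prop),
      integral_mtMeasure e μ (F := fun m => G (1, m)) (by fun_prop)] at ih ⊢
    have hGn : Integrable (fun p => G (n, mtMk e p)) ((volume.restrict (Ico 0 1)).prod μ) :=
      integrable_prod_restrict_Ico μ (by fun_prop) 0 1
    have hsplit : ∀ p : ℝ × X, G ((n + 1 : ℕ), mtMk e p) =
        G (1, mtMk e p) + G (n, mtMk e (p.1, e p.2)) := fun p => by
      rw [Nat.cast_succ, hG.add_mtMk, mtMk_add_one]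
    simp_rw [hsplit]
    rw [integral_add (integrable_prod_restrict_Ico μ (by fun_prop) 0 1) (hGn.comp_prodMap_id he),
      integral_comp_prodMap_id he hGn.1, ih]
    push_cast
    ring

theorem integral_one_eq_integral_mtMk_zero (hG : IsSuspensionLift e k G)
    (he : MeasurePreserving e μ μ) :
    ∫ m, G (1, m) ∂mtMeasure e μ = ∫ x, G (1, mtMk e (0, x)) ∂μ := by
  have hGc := hG.1
  have hint {F : ℝ × X → ℝ} (hF : Continuous F) := integrable_prod_restrict_Ico μ hF 0 1
  have hH : Integrable (fun p => G (p.1, mtMk e (0, p.2))) ((volume.restrict (Ico 0 1)).prod μ) :=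
    hint (by fun_prop)
  have hpt : (fun p : ℝ × X => G (1, mtMk e p)) = fun p =>
      G (1, mtMk e (0, p.2)) + G (p.1, mtMk e (0, e p.2)) - G (p.1, mtMk e (0, p.2)) :=
    funext fun p => hG.one_mtMk p.1 p.2
  rw [integral_mtMeasure e μ (by fun_prop), hpt,
    integral_sub ?_ hH, integral_add (hint (by fun_prop)) (hH.comp_prodMap_id he),
    integral_comp_prodMap_id he hH.1, add_sub_cancel_right,
    integral_fun_snd (fun x => G (1, mtMk e (0, x)))]
  · simp
  · exact (hint (by fun_prop)).add (hH.comp_prodMap_id he)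

theorem eq_integral_of_tendsto (hG : IsSuspensionLift e k G)
    (he : MeasurePreserving e μ μ) {r : ℝ}
    (hr : Tendsto (fun s : ℝ => (∫ m, G (s, m) ∂mtMeasure e μ) / s) atTop (nhds r)) :
    r = ∫ x, G (1, mtMk e (0, x)) ∂μ := by
  rw [← hG.integral_one_eq_integral_mtMk_zero he]
  refine tendsto_nhds_unique (hr.comp tendsto_natCast_atTop_atTop) ?_
  refine tendsto_const_nhds.congr' ?_
  filter_upwards [eventually_ne_atTop 0] with n hn
  simp [hG.integral_natCast_eq_mul he n, hn]

end Integral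

end IsSuspensionLift

end MappingTorus

theorem IsSuspensionLift.one_mtMk_zero_eq_add_degree [ConnectedSpace X] {φ : X ≃ₜ X}
    (Φ : IdentityIsotopy φ)
    {f : C(Circ × X, Circ)} {f₀ : C(X, Circ)} (hf₀ : ∀ p, f₀ p = f (0, p))
    {k : C(MappingTorus φ.toEquiv, Circ)}
    (hη : ∀ t ∈ Icc (0 : ℝ) 1, ∀ p, k (mtMk φ.toEquiv (t, (Φ.φt t).symm p)) = f (t, p))
    {G : ℝ × MappingTorus φ.toEquiv → ℝ} (hG : IsSuspensionLift φ.toEquiv k G)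
    {g : X → ℝ} (hg : IsRotationLift Φ f₀ g) {p₀ : X} {d : ℤ}
    (hd : HasCircleDegree (fun u => f (u, p₀)) d) (x : X) :
    G (1, mtMk φ.toEquiv (0, x)) = g x + d := by
  obtain ⟨hGc, hG0, hGk⟩ := hG
  obtain ⟨G₀, hG₀c, hG₀0, hG₀, hgG₀⟩ := hg
  obtain ⟨L, hLc, hL, hL1⟩ := hd
  have hinvc : Continuous fun q : ℝ × X => (Φ.φt q.1).symm q.2 := Φ.continuous_invFun
  set Z : ℝ × X → ℝ := fun q =>
    G (q.1, mtMk φ.toEquiv (0, (Φ.φt q.1).symm q.2)) - G₀ (q.1, (Φ.φt q.1).symm q.2) with hZdef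
  have hZc : Continuous Z := by fun_prop
  have hk₀ : ∀ w, k (mtMk φ.toEquiv (0, w)) = f (0, w) := fun w => by
    simpa [Φ.map_zero] using hη 0 (by simp) w
  have hZ : ∀ t ∈ Icc (0 : ℝ) 1, ∀ y, (Z (t, y) : Circ) = f (t, y) - f (0, y) := by
    intro t ht y
    rw [hZdef, AddCircle.coe_sub, hGk, hG₀, suspFlow_mtMk, zero_add, hη t ht, hk₀,
      Homeomorph.apply_symm_apply, hf₀, hf₀]
    abel
  have hZp₀ : EqOn (fun t => Z (t, p₀)) (fun t => L t - L 0) (Icc 0 1) :=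
    Circ.eqOn_of_coe_eqOn isPreconnected_Icc (by fun_prop) (by fun_prop)
      (fun t ht => by rw [hZ t ht, AddCircle.coe_sub, hL, hL]; rfl)
      (left_mem_Icc.mpr zero_le_one) (by simp [hZdef, hG0, hG₀0])
  have hZ₁ : (fun y => Z (1, y)) = fun _ => (d : ℝ) :=
    Circ.eq_of_coe_eq (by fun_prop) continuous_const
      (fun y => by rw [hZ 1 (right_mem_Icc.mpr zero_le_one), AddCircle.coe_period, sub_self,
        Circ.coe_intCast])
      (z₀ := p₀) ((hZp₀ (right_mem_Icc.mpr zero_le_one)).trans (by simp [hL1]))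
  have := congrFun hZ₁ (φ x)
  simp only [hZdef, Φ.map_one, Homeomorph.symm_apply_apply] at this
  rw [hgG₀]
  linarith

theorem asymptotic_cycle_of_isotopic_to_identity_general
    (S : Type*) [TopologicalSpace S] [CompactSpace S] [ConnectedSpace S]
    [MeasurableSpace S] [BorelSpace S]
    (μ : Measure S) [IsProbabilityMeasure μ]
    (φ : S ≃ₜ S) (Φ : IdentityIsotopy φ)
    (hinv : MeasurePreserving ⇑φ μ μ)
    (f : C(Circ × S, Circ)) (h : C(MappingTorus φ.toEquiv, Circ))
    -- `h = f ∘ η⁻¹`, i.e. `h ∘ η = f` :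
    (hη : ∀ t ∈ Icc (0 : ℝ) 1, ∀ p : S,
      h (mtMk φ.toEquiv (t, (Φ.φt t).symm p)) = f ((t : Circ), p))
    (r : ℝ) (hr : AsympPair φ.toEquiv μ h r)
    -- `d` is the degree of `f` on the circle factor :
    (p₀ : S) (d : ℤ) (hd : HasCircleDegree (fun u => f (u, p₀)) d)
    -- `s = ⟨F(Φ, μ), f(0, ·)⟩` :
    (s : ℝ)
    (hs : RotPair Φ μ
      ⟨fun p => f ((0 : Circ), p),
        f.continuous.comp (continuous_const.prodMk continuous_id)⟩ s) :
    r = (d : ℝ) + s := by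
  obtain ⟨G, hGc, hG0, hGh, hlim⟩ := hr
  have hG : IsSuspensionLift φ.toEquiv h G := ⟨hGc, hG0, hGh⟩
  obtain ⟨g, hg, rfl⟩ := hs
  have hg_int : Integrable g μ :=
    hg.continuous.integrable_of_hasCompactSupport (HasCompactSupport.of_compactSpace g)
  rw [hG.eq_integral_of_tendsto hinv hlim,
    funext (hG.one_mtMk_zero_eq_add_degree Φ (fun _ => rfl) hη hg hd),
    integral_add hg_int (integrable_const _)]
  simp [add_comm]

/-- **Lemma (computation of the asymptotic cycle).**  Let `S` be a compact oriented
surface, `μ` a Borel probability measure, `φ ∈ Homeo₀(S, μ)`, and `Φ` an identity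
isotopy of `φ`.  Under the homeomorphism `η : (ℝ/ℤ) × S → M_φ`,
`[(t, p)] ↦ [(t, φₜ⁻¹(p))]`, the asymptotic cycle satisfies
`η^* C(φ, μ) = [𝕋] + F(Φ, μ)` in `H₁((ℝ/ℤ) × S; ℝ)`.

In pairing form: for `f : C((ℝ/ℤ) × S, ℝ/ℤ)` and `h = f ∘ η⁻¹ : C(M_φ, ℝ/ℤ)`,
`⟨C(φ, μ), h⟩ = deg (f(·, p₀)) + ⟨F(Φ, μ), f(0, ·)⟩`. -/
theorem asymptotic_cycle_of_isotopic_to_identity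
    (S : Type*) [TopologicalSpace S] [CompactSpace S] [ConnectedSpace S] [T2Space S]
    [ChartedSpace (EuclideanHalfSpace 2) S] [MeasurableSpace S] [BorelSpace S]
    (μ : Measure S) [IsProbabilityMeasure μ]
    (φ : S ≃ₜ S) (Φ : IdentityIsotopy φ)
    -- `φ ∈ Homeo₀(S, μ)` :
    (hmem : ∃ Ψ : IdentityIsotopy φ, ∀ t : ℝ, MeasurePreserving (Ψ.φt t) μ μ)
    (hinv : MeasurePreserving ⇑φ μ μ)
    (f : C(Circ × S, Circ)) (h : C(MappingTorus φ.toEquiv, Circ))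
    -- `h = f ∘ η⁻¹`, i.e. `h ∘ η = f` :
    (hη : ∀ t ∈ Icc (0 : ℝ) 1, ∀ p : S,
      h (mtMk φ.toEquiv (t, (Φ.φt t).symm p)) = f ((t : Circ), p))
    (r : ℝ) (hr : AsympPair φ.toEquiv μ h r)
    -- `d` is the degree of `f` on the circle factor :
    (p₀ : S) (d : ℤ) (hd : HasCircleDegree (fun u => f (u, p₀)) d)
    -- `s = ⟨F(Φ, μ), f(0, ·)⟩` :
    (s : ℝ)
    (hs : RotPair Φ μ
      ⟨fun p => f ((0 : Circ), p),
        f.continuous.comp (continuous_const.prodMk continuous_id)⟩ s) :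
    r = (d : ℝ) + s :=
  asymptotic_cycle_of_isotopic_to_identity_general S μ φ Φ hinv f h hη r hr p₀ d hd s hs
end
end

section
/- Let Σ be a closed oriented surface with area form ω, p ∈ Σ, and Φ: [0,1] → Diff_0(Σ, ω) an identity isotopy such that Φ(t) fixes p for every t. Let (Σ̂, ω̂) be the surface obtained by blowing up p and gluing in a disk of prescribed area (so that ∫_{Σ̂} ω̂ > ∫_Σ ω), let π: Σ̂ → Σ be the blow-down map, and let Φ̂ be any extension of Φ to an identity isotopy in Diff(Σ̂, ω̂). Then (∫_{Σ̂} ω̂) · π_* F(Φ̂) = (∫_Σ ω) · F(Φ) in H_1(Σ; ℝ). -/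
open MeasureTheory Set Function Filter

noncomputable section

variable {X : Type*} [TopologicalSpace X]

/-!
Rotation lifts are unique: each is the endpoint of the lifts, through the covering
`ℝ → ℝ/ℤ`, of the paths `t ↦ f (φₜ x) - f x`. Hence the lift `g'` for `Φ'` and `f ∘ pr` is
`g ∘ pr`, where `g` is the lift for `Φ` and `f`, and `g` vanishes at the fixed point `p`.
Away from `p` the blow-down map pushes `ν` forward to `μ`, so `∫ g' dν = ∫ g dμ`; the areas
in the statement only undo the normalizations of the measures.
-/

theorem AddCircle.eq_of_coe_comp_eq {Y : Type*} [TopologicalSpace Y] [PreconnectedSpace Y]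
    {a : ℝ} [Fact (0 < a)] {G₁ G₂ : Y → ℝ} (h₁ : Continuous G₁) (h₂ : Continuous G₂)
    (he : ∀ y, (G₁ y : AddCircle a) = G₂ y) (y₀ : Y) (h₀ : G₁ y₀ = G₂ y₀) : G₁ = G₂ :=
  (AddCircle.isCoveringMap_coe a).eq_of_comp_eq h₁ h₂ (funext he) y₀ h₀

namespace IsRotationLift

variable {φ : X ≃ₜ X} {Φ : IdentityIsotopy φ} {f : C(X, Circ)} {g : X → ℝ}

theorem continuous_s16 (hg : IsRotationLift Φ f g) : Continuous g := by
  obtain ⟨G, hGc, -, -, hgG⟩ := hg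
  rw [funext hgG]
  fun_prop

theorem unique {g' : X → ℝ} (hg : IsRotationLift Φ f g) (hg' : IsRotationLift Φ f g') :
    g = g' := by
  obtain ⟨G, hGc, hG0, hGf, hgG⟩ := hg
  obtain ⟨G', hG'c, hG'0, hG'f, hg'G'⟩ := hg'
  funext x
  have hpath : (fun t => G (t, x)) = fun t => G' (t, x) :=
    AddCircle.eq_of_coe_comp_eq (by fun_prop) (by fun_prop)
      (fun t => (hGf t x).trans (hG'f t x).symm) 0 ((hG0 x).trans (hG'0 x).symm)
  rw [hgG, hg'G', congrFun hpath 1]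

theorem apply_eq_zero_of_forall_isFixedPt (hg : IsRotationLift Φ f g) {p : X}
    (hfix : ∀ t, IsFixedPt (Φ.φt t) p) : g p = 0 := by
  obtain ⟨G, hGc, hG0, hGf, hgG⟩ := hg
  have hpath : (fun t => G (t, p)) = fun _ => 0 :=
    AddCircle.eq_of_coe_comp_eq (by fun_prop) continuous_const
      (fun t => by rw [hGf, hfix, sub_self, QuotientAddGroup.mk_zero]) 0 (hG0 p)
  rw [hgG, congrFun hpath 1]

theorem comp {Y : Type*} [TopologicalSpace Y] {ψ : Y ≃ₜ Y} {Ψ : IdentityIsotopy ψ}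
    {π : C(Y, X)} (hext : ∀ t y, π (Ψ.φt t y) = Φ.φt t (π y)) (hg : IsRotationLift Φ f g) :
    IsRotationLift Ψ (f.comp π) (g ∘ π) := by
  obtain ⟨G, hGc, hG0, hGf, hgG⟩ := hg
  refine ⟨fun q => G (q.1, π q.2), by fun_prop, fun y => hG0 (π y), fun t y => ?_,
    fun y => hgG (π y)⟩
  simp only [ContinuousMap.comp_apply, hext, hGf]

end IsRotationLift

theorem MeasureTheory.toReal_measure_univ_mul_integral_inv_smul {α : Type*} [MeasurableSpace α]
    (μ : Measure α) [IsFiniteMeasure μ] (g : α → ℝ) :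
    (μ univ).toReal * ∫ x, g x ∂((μ univ)⁻¹ • μ) = ∫ x, g x ∂μ := by
  rcases eq_zero_or_neZero μ with rfl | hμ
  · simp
  rw [integral_smul_measure, smul_eq_mul, ENNReal.toReal_inv, ← mul_assoc,
    mul_inv_cancel₀ (ENNReal.toReal_ne_zero.mpr ⟨NeZero.ne _, measure_ne_top μ univ⟩), one_mul]

theorem MeasureTheory.Measure.restrict_compl_singleton_map_eq {α β : Type*} [MeasurableSpace α]
    [MeasurableSpace β] [MeasurableSingletonClass β] {ν : Measure α} {μ : Measure β}
    [NullSingletonClass μ] {π : α → β} (hπ : Measurable π) {p : β}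
    (hπμ : ∀ E, MeasurableSet E → E ⊆ {p}ᶜ → ν (π ⁻¹' E) = μ E) :
    (ν.map π).restrict {p}ᶜ = μ := by
  ext E hE
  have hEp : MeasurableSet (E ∩ {p}ᶜ) := hE.inter (measurableSet_singleton p).compl
  rw [Measure.restrict_apply hE, Measure.map_apply hπ hEp, hπμ _ hEp inter_subset_right,
    ← sdiff_eq, measure_sdiff_null (measure_singleton p)]

theorem blowup_rotation_vector_general
    (S : Type*) [TopologicalSpace S] [T2Space S] [MeasurableSpace S] [BorelSpace S]
    (S' : Type*) [TopologicalSpace S'] [MeasurableSpace S'] [BorelSpace S']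
    -- the measures induced by the area forms `ω` on `S` and `ω'` on `S'` :
    (μ : Measure S) [IsFiniteMeasure μ] [NullSingletonClass μ]
    (ν : Measure S') [IsFiniteMeasure ν]
    (p : S)
    (φ : S ≃ₜ S) (Φ : IdentityIsotopy φ)
    -- `Φ` is an identity isotopy in `Diff₀(S, ω)` fixing `p` for every `t` :
    (hfix : ∀ t : ℝ, Φ.φt t p = p)
    -- the blow-down map `pr : S' → S` :
    (pr : S' → S) (hprc : Continuous pr)
    (hprμ : ∀ E : Set S, MeasurableSet E → E ⊆ {p}ᶜ → ν (pr ⁻¹' E) = μ E)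
    -- `Φ'` is an extension of `Φ` to an identity isotopy in `Diff(S', ω')` :
    (φ' : S' ≃ₜ S') (Φ' : IdentityIsotopy φ')
    (hext : ∀ (t : ℝ) (x : S'), pr (Φ'.φt t x) = Φ.φt t (pr x)) :
    ∀ (f : C(S, Circ)) (r' r : ℝ),
      RotPair Φ' ((ν Set.univ)⁻¹ • ν) (f.comp ⟨pr, hprc⟩) r' →
      RotPair Φ ((μ Set.univ)⁻¹ • μ) f r →
      (ν Set.univ).toReal * r' = (μ Set.univ).toReal * r := by
  rintro f r' r ⟨g', hg', rfl⟩ ⟨g, hg, rfl⟩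
  have hg'_eq : g' = g ∘ pr := IsRotationLift.unique hg' (IsRotationLift.comp hext hg)
  have hgp : g p = 0 := IsRotationLift.apply_eq_zero_of_forall_isFixedPt hg hfix
  rw [toReal_measure_univ_mul_integral_inv_smul, toReal_measure_univ_mul_integral_inv_smul,
    hg'_eq]
  calc ∫ x, g (pr x) ∂ν = ∫ y, g y ∂(ν.map pr) :=
        (integral_map hprc.aemeasurable (IsRotationLift.continuous_s16 hg).aestronglyMeasurable).symm
    _ = ∫ y in {p}ᶜ, g y ∂(ν.map pr) :=
        (setIntegral_eq_integral_of_forall_compl_eq_zero fun y hy => by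
          rwa [not_not.mp hy]).symm
    _ = ∫ y, g y ∂μ := by rw [Measure.restrict_compl_singleton_map_eq hprc.measurable hprμ]

/-- **Lemma (rotation vector of the blow-up).**  Let `S` be a closed oriented surface
with area form `ω` (inducing the measure `μ`), `p ∈ S`, and `Φ` an identity isotopy
in `Diff₀(S, ω)` fixing `p` at all times.  Let `S'` be the surface obtained by
blowing up `p` and gluing in a disk of prescribed positive area (so that
`∫_{S'} ω' > ∫_S ω`), with area measure `ν`, let `pr : S' → S` be the blow-down map
(a continuous surjection collapsing the glued disk to `p`, injective away from it,
and measure-compatible away from `p`), and let `Φ'` be any extension of `Φ` to an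
identity isotopy in `Diff(S', ω')`, i.e. `pr ∘ Φ'ₜ = Φₜ ∘ pr`.  Then
`(∫_{S'} ω') · pr_* F(Φ') = (∫_S ω) · F(Φ)` in `H₁(S; ℝ)`; in pairing form,
`(∫_{S'} ω') · ⟨F(Φ'), f ∘ pr⟩ = (∫_S ω) · ⟨F(Φ), f⟩` for every `f : S → ℝ/ℤ`
(rotation vectors being taken with respect to the normalized area measures). -/
theorem blowup_rotation_vector
    (S : Type*) [TopologicalSpace S] [CompactSpace S] [ConnectedSpace S] [T2Space S]
    [MeasurableSpace S] [BorelSpace S]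
    [ChartedSpace (EuclideanSpace ℝ (Fin 2)) S]
    [IsManifold (modelWithCornersSelf ℝ (EuclideanSpace ℝ (Fin 2))) (⊤ : ℕ∞) S]
    (S' : Type*) [TopologicalSpace S'] [CompactSpace S'] [ConnectedSpace S'] [T2Space S']
    [MeasurableSpace S'] [BorelSpace S']
    [ChartedSpace (EuclideanSpace ℝ (Fin 2)) S']
    [IsManifold (modelWithCornersSelf ℝ (EuclideanSpace ℝ (Fin 2))) (⊤ : ℕ∞) S']
    -- the measures induced by the area forms `ω` on `S` and `ω'` on `S'` :
    (μ : Measure S) [IsFiniteMeasure μ] [NullSingletonClass μ]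
    (hμpos : ∀ U : Set S, IsOpen U → U.Nonempty → 0 < μ U)
    (ν : Measure S') [IsFiniteMeasure ν] [NullSingletonClass ν]
    (hνpos : ∀ U : Set S', IsOpen U → U.Nonempty → 0 < ν U)
    (p : S)
    (φ : S ≃ₜ S) (Φ : IdentityIsotopy φ)
    -- `Φ` is an identity isotopy in `Diff₀(S, ω)` fixing `p` for every `t` :
    (hsm : ∀ t : ℝ,
      ContMDiff (modelWithCornersSelf ℝ (EuclideanSpace ℝ (Fin 2)))
        (modelWithCornersSelf ℝ (EuclideanSpace ℝ (Fin 2))) (⊤ : ℕ∞) ⇑(Φ.φt t) ∧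
      MeasurePreserving ⇑(Φ.φt t) μ μ)
    (hfix : ∀ t : ℝ, Φ.φt t p = p)
    -- the blow-down map `pr : S' → S` :
    (pr : S' → S) (hprc : Continuous pr) (hprs : Function.Surjective pr)
    (hprinj : Set.InjOn pr (pr ⁻¹' {p}ᶜ))
    (hprμ : ∀ E : Set S, MeasurableSet E → E ⊆ {p}ᶜ → ν (pr ⁻¹' E) = μ E)
    -- the glued disk has positive area, so `∫_{S'} ω' > ∫_S ω` :
    (harea : μ Set.univ < ν Set.univ)
    -- `Φ'` is an extension of `Φ` to an identity isotopy in `Diff(S', ω')` :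
    (φ' : S' ≃ₜ S') (Φ' : IdentityIsotopy φ')
    (hsm' : ∀ t : ℝ,
      ContMDiff (modelWithCornersSelf ℝ (EuclideanSpace ℝ (Fin 2)))
        (modelWithCornersSelf ℝ (EuclideanSpace ℝ (Fin 2))) (⊤ : ℕ∞) ⇑(Φ'.φt t) ∧
      MeasurePreserving ⇑(Φ'.φt t) ν ν)
    (hext : ∀ (t : ℝ) (x : S'), pr (Φ'.φt t x) = Φ.φt t (pr x)) :
    ∀ (f : C(S, Circ)) (r' r : ℝ),
      RotPair Φ' ((ν Set.univ)⁻¹ • ν) (f.comp ⟨pr, hprc⟩) r' →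
      RotPair Φ ((μ Set.univ)⁻¹ • μ) f r →
      (ν Set.univ).toReal * r' = (μ Set.univ).toReal * r :=
  blowup_rotation_vector_general S S' μ ν p φ Φ hfix pr hprc hprμ φ' Φ' hext

end
end

section
/- Let Σ be a closed oriented surface of genus at least 2 with smooth area form ω, and let φ ∈ Homeo_0(Σ, ω). If the asymptotic cycle C(φ) lies in H_1(M_φ; ℚ), then the rotation vector F(φ) lies in H_1(Σ; ℚ); in particular φ has rational rotation direction. -/
open MeasureTheory Set Function Filter
open scoped commutatorElement

noncomputable section

variable {X : Type*} [TopologicalSpace X]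

/-- The relator `[a₁,b₁]⋯[a_g,b_g]` of the genus-`g` surface group
`⟨a₁, b₁, …, a_g, b_g ∣ [a₁,b₁]⋯[a_g,b_g]⟩`. -/
def surfaceGroupRels (g : ℕ) : Set (FreeGroup (Fin g × Bool)) :=
  {(List.ofFn fun i : Fin g =>
      ⁅FreeGroup.of (i, true), FreeGroup.of (i, false)⁆).prod}

/-- The fundamental group of the closed oriented surface of genus `g`. -/
abbrev SurfaceGroup (g : ℕ) := PresentedGroup (surfaceGroupRels g)

/-- `X` is a closed oriented surface of genus `g`: a compact connected topological
`2`-manifold whose fundamental group is the genus-`g` surface group (by the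
classification of surfaces this characterizes the closed oriented surface of
genus `g`). -/
def IsClosedSurfaceOfGenus (X : Type*) [TopologicalSpace X] (g : ℕ) : Prop :=
  CompactSpace X ∧ ConnectedSpace X ∧ T2Space X ∧
    Nonempty (ChartedSpace (EuclideanSpace ℝ (Fin 2)) X) ∧
    ∀ x : X, Nonempty (FundamentalGroup X x ≃* SurfaceGroup g)

namespace MTaux
open Topology
variable {X : Type*} [TopologicalSpace X]

/-- `n`-th power of the underlying permutation, applied. -/
def pz (φ : X ≃ₜ X) (n : ℤ) (x : X) : X := (φ.toEquiv ^ n) x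

lemma pz_add (φ : X ≃ₜ X) (a b : ℤ) (x : X) : pz φ (a + b) x = pz φ a (pz φ b x) := by
  rw [pz, pz, pz, zpow_add, Equiv.Perm.mul_apply]

lemma pz_zero (φ : X ≃ₜ X) (x : X) : pz φ 0 x = x := rfl

lemma pz_one (φ : X ≃ₜ X) (x : X) : pz φ 1 x = φ x := rfl

lemma contZpow (φ : X ≃ₜ X) : ∀ n : ℤ, Continuous (pz φ n) := by
  intro n
  induction n using Int.induction_on with
  | zero => exact continuous_id
  | succ i ih =>
      have h : pz φ ((i:ℤ) + 1) = pz φ (i:ℤ) ∘ φ := by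
        funext x; rw [pz_add, pz_one]; rfl
      rw [h]; exact ih.comp φ.continuous
  | pred i ih =>
      have h : pz φ (-(i:ℤ) - 1) = pz φ (-(i:ℤ)) ∘ ⇑φ.symm := by
        funext x
        rw [show (-(i:ℤ) - 1) = (-(i:ℤ)) + (-1) by ring, pz_add]
        have : pz φ (-1) x = φ.symm x := by
          simp [pz, zpow_neg, zpow_one]
        rw [this]; rfl
      rw [h]; exact ih.comp φ.symm.continuous

/-- Birkhoff sums over `ℕ`. -/
def birk (φ : X ≃ₜ X) (g : X → ℝ) (m : ℕ) (x : X) : ℝ :=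
  ∑ k ∈ Finset.range m, g (pz φ (k : ℤ) x)

lemma birk_succ (φ : X ≃ₜ X) (g : X → ℝ) (m : ℕ) (x : X) :
    birk φ g (m + 1) x = birk φ g m x + g (pz φ (m : ℤ) x) :=
  Finset.sum_range_succ _ m

lemma birk_succ' (φ : X ≃ₜ X) (g : X → ℝ) (m : ℕ) (x : X) :
    birk φ g (m + 1) x = g x + birk φ g m (φ x) := by
  rw [birk, Finset.sum_range_succ']
  have h1 : ∀ k : ℕ, g (pz φ ((k:ℕ) + 1 : ℕ) x) = g (pz φ (k:ℤ) (φ x)) := by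
    intro k
    rw [show (((k:ℕ) + 1 : ℕ) : ℤ) = (k:ℤ) + 1 by push_cast; ring, pz_add, pz_one]
  calc (∑ k ∈ Finset.range m, g (pz φ ((k:ℕ)+1:ℕ) x)) + g (pz φ ((0:ℕ):ℤ) x)
      = (∑ k ∈ Finset.range m, g (pz φ (k:ℤ) (φ x))) + g x := by
        rw [Finset.sum_congr rfl fun k _ => h1 k]; rw [show pz φ ((0:ℕ):ℤ) x = x from rfl]
    _ = g x + birk φ g m (φ x) := by rw [add_comm]; rfl

lemma birk_cont (φ : X ≃ₜ X) {g : X → ℝ} (hg : Continuous g) (m : ℕ) :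
    Continuous (birk φ g m) :=
  continuous_finset_sum _ fun k _ => hg.comp (contZpow φ k)

/-- The `ℤ`-cocycle of Birkhoff sums. -/
def Sg (φ : X ≃ₜ X) (g : X → ℝ) (n : ℤ) (x : X) : ℝ :=
  birk φ g n.toNat x - birk φ g (-n).toNat (pz φ n x)

lemma Sg_zero (φ : X ≃ₜ X) (g : X → ℝ) (x : X) : Sg φ g 0 x = 0 := by
  simp [Sg, birk]

lemma Sg_cont (φ : X ≃ₜ X) {g : X → ℝ} (hg : Continuous g) (n : ℤ) :
    Continuous (Sg φ g n) :=
  ((birk_cont φ hg _)).sub ((birk_cont φ hg _).comp (contZpow φ n))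

lemma Sg_step2 (φ : X ≃ₜ X) (g : X → ℝ) (n : ℤ) (x : X) :
    Sg φ g (n + 1) x = Sg φ g n x + g (pz φ n x) := by
  rcases le_or_gt 0 n with hn | hn
  · have h1 : (n + 1).toNat = n.toNat + 1 := by omega
    have h2 : (-(n + 1)).toNat = 0 := by omega
    have h3 : (-n).toNat = 0 := by omega
    have h4 : ((n.toNat : ℕ) : ℤ) = n := Int.toNat_of_nonneg hn
    rw [Sg, Sg, h1, h2, h3, birk_succ, h4]
    simp [birk]
  · have h1 : (n + 1).toNat = 0 := by omega
    have h3 : (-n).toNat = (-(n+1)).toNat + 1 := by omega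
    have h2 : n.toNat = 0 := by omega
    rw [Sg, Sg, h1, h2, h3, birk_succ']
    simp only [birk, Finset.range_zero, Finset.sum_empty]
    have key : φ (pz φ n x) = pz φ (n + 1) x := by
      rw [show n + 1 = 1 + n by ring, pz_add, pz_one]
    rw [key]
    ring

lemma Sg_step1 (φ : X ≃ₜ X) (g : X → ℝ) (n : ℤ) (x : X) :
    Sg φ g (n + 1) x = g x + Sg φ g n (φ x) := by
  rcases le_or_gt 0 n with hn | hn
  · have h1 : (n + 1).toNat = n.toNat + 1 := by omega
    have h2 : (-(n + 1)).toNat = 0 := by omega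
    have h3 : (-n).toNat = 0 := by omega
    rw [Sg, Sg, h1, h2, h3, birk_succ']
    simp [birk]
  · have h1 : (n + 1).toNat = 0 := by omega
    have h2 : n.toNat = 0 := by omega
    have h3 : (-n).toNat = (-(n+1)).toNat + 1 := by omega
    rw [Sg, Sg, h1, h2, h3, birk_succ]
    simp only [birk, Finset.range_zero, Finset.sum_empty]
    have key : pz φ n (φ x) = pz φ (n + 1) x := by
      rw [pz_add, pz_one]
    have key2 : pz φ (((-(n+1)).toNat : ℤ)) (pz φ (n+1) x) = x := by
      rw [← pz_add]
      have : ((-(n+1)).toNat : ℤ) + (n + 1) = 0 := by omega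
      rw [this, pz_zero]
    rw [key, key2]
    ring

lemma Sg_add (φ : X ≃ₜ X) (g : X → ℝ) (a b : ℤ) (x : X) :
    Sg φ g (a + b) x = Sg φ g a x + Sg φ g b (pz φ a x) := by
  induction b using Int.induction_on with
  | zero => simp [Sg_zero]
  | succ i ih =>
      rw [show a + ((i:ℤ) + 1) = (a + i) + 1 by ring, Sg_step2, ih, Sg_step2,
        ← pz_add, add_comm (i:ℤ) a]
      ring
  | pred i ih =>
      have e1 : Sg φ g (-(i:ℤ)) (pz φ a x)
          = Sg φ g (-(i:ℤ) - 1) (pz φ a x) + g (pz φ (-(i:ℤ) - 1) (pz φ a x)) := by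
        rw [← Sg_step2, sub_add_cancel]
      have e2 : Sg φ g (a + -(i:ℤ))  x
          = Sg φ g (a + -(i:ℤ) - 1) x + g (pz φ (a + -(i:ℤ) - 1) x) := by
        rw [← Sg_step2, sub_add_cancel]
      rw [show a + (-(i:ℤ) - 1) = a + -(i:ℤ) - 1 by ring]
      have := ih
      rw [e2, e1] at this
      rw [← pz_add, show -(i:ℤ) - 1 + a = a + -(i:ℤ) - 1 by ring] at this
      linarith

end MTaux

namespace MTaux
open Topology
variable {X : Type*} [TopologicalSpace X]

/-- The extended lift on `ℝ × X`. -/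
def Gext (φ : X ≃ₜ X) (g : X → ℝ) (G : ℝ × X → ℝ) (p : ℝ × X) : ℝ :=
  Sg φ g ⌊p.1⌋ p.2 + G (Int.fract p.1, pz φ ⌊p.1⌋ p.2)

lemma Gext_shift (φ : X ≃ₜ X) (g : X → ℝ) (G : ℝ × X → ℝ) (t : ℝ) (n : ℤ) (x : X) :
    Gext φ g G (t + n, x) = Sg φ g n x + Gext φ g G (t, pz φ n x) := by
  rw [Gext, Gext]
  simp only [Int.floor_add_intCast, Int.fract_add_intCast]
  rw [show ⌊t⌋ + n = n + ⌊t⌋ by ring, Sg_add,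
    show pz φ (n + ⌊t⌋) x = pz φ ⌊t⌋ (pz φ n x) by rw [add_comm n ⌊t⌋, pz_add]]
  ring

/-- On the strip `Icc n (n+1)`, `Gext` is given by a single continuous formula. -/
def strip (φ : X ≃ₜ X) (g : X → ℝ) (G : ℝ × X → ℝ) (n : ℤ) (p : ℝ × X) : ℝ :=
  Sg φ g n p.2 + G (p.1 - n, pz φ n p.2)

lemma strip_cont (φ : X ≃ₜ X) {g : X → ℝ} (hg : Continuous g) {G : ℝ × X → ℝ}
    (hG : Continuous G) (n : ℤ) : Continuous (strip φ g G n) := by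
  apply Continuous.add
  · exact (Sg_cont φ hg n).comp continuous_snd
  · exact hG.comp (((continuous_fst.sub continuous_const)).prodMk
      ((contZpow φ n).comp continuous_snd))

lemma Gext_eq_strip (φ : X ≃ₜ X) (g : X → ℝ) {G : ℝ × X → ℝ}
    (hG0 : ∀ x, G (0, x) = 0) (hg1 : ∀ x, g x = G (1, x)) (n : ℤ) {p : ℝ × X}
    (h1 : (n : ℝ) ≤ p.1) (h2 : p.1 ≤ (n : ℝ) + 1) :
    Gext φ g G p = strip φ g G n p := by
  rcases lt_or_eq_of_le h2 with h2' | h2'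
  · have hfl : ⌊p.1⌋ = n := by
      rw [Int.floor_eq_iff]
      · exact ⟨h1, by exact_mod_cast h2'⟩
    rw [Gext, strip, hfl, Int.fract]
    rw [hfl]
  · have hfl : ⌊p.1⌋ = n + 1 := by rw [h2']; exact_mod_cast Int.floor_intCast (n+1)
    have hfr : Int.fract p.1 = 0 := by
      rw [Int.fract, hfl, h2']; push_cast; ring
    rw [Gext, strip, hfl, hfr, hG0, add_zero, h2']
    rw [show ((n:ℝ) + 1) - n = 1 by ring, ← hg1, Sg_step2]

lemma Gext_cont (φ : X ≃ₜ X) {g : X → ℝ} {G : ℝ × X → ℝ}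
    (hG : Continuous G) (hG0 : ∀ x, G (0, x) = 0) (hg1 : ∀ x, g x = G (1, x)) :
    Continuous (Gext φ g G) := by
  have hg : Continuous g := by
    have : g = fun x => G (1, x) := funext hg1
    rw [this]; exact hG.comp (continuous_const.prodMk continuous_id)
  rw [continuous_iff_continuousAt]
  intro p
  set n : ℤ := ⌊p.1⌋ with hn
  rcases eq_or_ne ((n:ℝ)) p.1 with heq | hne
  · -- p.1 is an integer
    have hunion : {q : ℝ × X | q.1 ≤ p.1} ∪ {q : ℝ × X | p.1 ≤ q.1} = univ := by
      ext q; simp [le_total q.1 p.1]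
    rw [← continuousWithinAt_univ, ← hunion, continuousWithinAt_union]
    constructor
    · -- left: agrees with strip (n-1)
      apply ContinuousWithinAt.congr_of_eventuallyEq
        ((strip_cont φ hg hG (n-1)).continuousWithinAt)
      · have hev : ∀ᶠ q : ℝ × X in 𝓝 p, ((n:ℝ) - 1) < q.1 := by
          apply ContinuousAt.eventually_lt continuousAt_const continuous_fst.continuousAt
          rw [← heq]; linarith
        filter_upwards [nhdsWithin_le_nhds hev, self_mem_nhdsWithin] with q hq1 hq2
        exact Gext_eq_strip φ g hG0 hg1 (n-1)
          (by push_cast; linarith) (by push_cast [le_of_lt]; rw [← heq] at hq2; push_cast at hq2 ⊢; linarith)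
      · exact Gext_eq_strip φ g hG0 hg1 (n-1)
          (by push_cast; rw [← heq]; push_cast; linarith) (by push_cast; linarith [heq.ge, heq.le]; )
    · -- right: agrees with strip n
      apply ContinuousWithinAt.congr_of_eventuallyEq
        ((strip_cont φ hg hG n).continuousWithinAt)
      · have hev : ∀ᶠ q : ℝ × X in 𝓝 p, q.1 < (n:ℝ) + 1 := by
          apply ContinuousAt.eventually_lt continuous_fst.continuousAt continuousAt_const
          rw [← heq]; linarith
        filter_upwards [nhdsWithin_le_nhds hev, self_mem_nhdsWithin] with q hq1 hq2
        refine Gext_eq_strip φ g hG0 hg1 n ?_ (le_of_lt hq1)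
        rw [← heq] at hq2; exact hq2
      · exact Gext_eq_strip φ g hG0 hg1 n (le_of_eq heq) (by rw [← heq]; linarith)
  · -- p.1 strictly inside the strip
    have h1 : (n:ℝ) < p.1 := lt_of_le_of_ne (Int.floor_le p.1) hne
    have h2 : p.1 < (n:ℝ) + 1 := by exact_mod_cast Int.lt_floor_add_one p.1
    have hev : (fun q => Gext φ g G q) =ᶠ[𝓝 p] strip φ g G n := by
      have hev1 : ∀ᶠ q : ℝ × X in 𝓝 p, (n:ℝ) < q.1 :=
        ContinuousAt.eventually_lt continuousAt_const continuous_fst.continuousAt h1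
      have hev2 : ∀ᶠ q : ℝ × X in 𝓝 p, q.1 < (n:ℝ) + 1 :=
        ContinuousAt.eventually_lt continuous_fst.continuousAt continuousAt_const h2
      filter_upwards [hev1, hev2] with q hq1 hq2
      exact Gext_eq_strip φ g hG0 hg1 n (le_of_lt hq1) (le_of_lt hq2)
    exact ((strip_cont φ hg hG n).continuousAt).congr hev.symm

end MTaux

namespace MTaux2
open MTaux Topology

variable {X : Type*} [TopologicalSpace X]

lemma coe_add (a b : ℝ) : ((a + b : ℝ) : Circ) = (a : Circ) + (b : Circ) := rfl
lemma coe_sub (a b : ℝ) : ((a - b : ℝ) : Circ) = (a : Circ) - (b : Circ) := rfl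
lemma coe_zero : ((0 : ℝ) : Circ) = 0 := rfl

lemma Sg_cast (φ : X ≃ₜ X) (g : X → ℝ) (f : C(X, Circ))
    (hgf : ∀ x, ((g x : ℝ) : Circ) = f (φ x) - f x) (n : ℤ) (x : X) :
    ((Sg φ g n x : ℝ) : Circ) = f (pz φ n x) - f x := by
  induction n using Int.induction_on with
  | zero => rw [Sg_zero, pz_zero, coe_zero, sub_self]
  | succ i ih =>
      rw [Sg_step2, coe_add, ih, hgf,
        show φ (pz φ (i:ℤ) x) = pz φ ((i:ℤ)+1) x by rw [add_comm, pz_add, pz_one]]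
      abel
  | pred i ih =>
      have h := Sg_step2 φ g (-(i:ℤ) - 1) x
      rw [sub_add_cancel] at h
      have : ((Sg φ g (-(i:ℤ) - 1) x : ℝ) : Circ)
          = ((Sg φ g (-(i:ℤ)) x : ℝ) : Circ) - ((g (pz φ (-(i:ℤ)-1) x) : ℝ) : Circ) := by
        rw [h, coe_add]; abel
      have hφp : φ (pz φ (-(i:ℤ)-1) x) = pz φ (-(i:ℤ)) x := by
        conv_rhs => rw [show -(i:ℤ) = 1 + (-(i:ℤ)-1) by ring, pz_add, pz_one]
      rw [this, ih, hgf, hφp]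
      abel

variable [MeasurableSpace X] [BorelSpace X]

lemma mp_pz (φ : X ≃ₜ X) {μ : Measure X} (hφ : MeasurePreserving φ μ μ) (n : ℤ) :
    MeasurePreserving (pz φ n) μ μ := by
  have hsymm : MeasurePreserving (⇑φ.symm) μ μ := by
    have h2 : MeasurePreserving (⇑φ.toMeasurableEquiv) μ μ := by
      rwa [Homeomorph.toMeasurableEquiv_coe]
    have := h2.symm φ.toMeasurableEquiv
    rwa [show ⇑φ.toMeasurableEquiv.symm = ⇑φ.symm from rfl] at this
  induction n using Int.induction_on with
  | zero => exact MeasurePreserving.id μ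
  | succ i ih =>
      have h : pz φ ((i:ℤ) + 1) = pz φ (i:ℤ) ∘ φ := by
        funext x; rw [pz_add, pz_one]; rfl
      rw [h]; exact ih.comp hφ
  | pred i ih =>
      have h : pz φ (-(i:ℤ) - 1) = pz φ (-(i:ℤ)) ∘ ⇑φ.symm := by
        funext x
        rw [show (-(i:ℤ) - 1) = (-(i:ℤ)) + (-1) by ring, pz_add]
        have hx : pz φ (-1) x = φ.symm x := by simp [pz, zpow_neg, zpow_one]
        rw [hx]; rfl
      rw [h]; exact ih.comp hsymm

lemma cont_integrable [CompactSpace X] (μ : Measure X) [IsFiniteMeasure μ]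
    {h : X → ℝ} (hc : Continuous h) : Integrable h μ := by
  obtain ⟨C, hC⟩ := isCompact_univ.exists_bound_of_continuousOn hc.continuousOn
  exact Integrable.mono' (integrable_const C) hc.aestronglyMeasurable
    (ae_of_all _ fun x => hC x trivial)

lemma Sg_integral [CompactSpace X] (φ : X ≃ₜ X) {g : X → ℝ} (hg : Continuous g)
    (μ : Measure X) [IsProbabilityMeasure μ] (hφ : MeasurePreserving φ μ μ) (n : ℤ) :
    ∫ x, Sg φ g n x ∂μ = (n : ℝ) * ∫ x, g x ∂μ := by
  have hemb : MeasurableEmbedding (⇑φ) := by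
    rw [← Homeomorph.toMeasurableEquiv_coe]
    exact φ.toMeasurableEquiv.measurableEmbedding
  have key : ∀ m : ℤ, ∫ x, Sg φ g (m + 1) x ∂μ = (∫ x, g x ∂μ) + ∫ x, Sg φ g m x ∂μ := by
    intro m
    have h1 : ∫ x, Sg φ g (m+1) x ∂μ = ∫ x, (g x + (Sg φ g m ∘ ⇑φ) x) ∂μ := by
      congr 1; funext x; exact Sg_step1 φ g m x
    rw [h1, integral_add (cont_integrable μ hg)
      (cont_integrable μ ((Sg_cont φ hg m).comp φ.continuous))]
    congr 1
    exact hφ.integral_comp hemb (Sg φ g m)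
  induction n using Int.induction_on with
  | zero => simp [Sg_zero]
  | succ i ih => rw [key, ih]; push_cast; ring
  | pred i ih =>
      have h := key (-(i:ℤ) - 1)
      rw [sub_add_cancel, ih] at h
      push_cast at h ⊢
      linarith

end MTaux2


namespace MTaux3
open MTaux MTaux2 Topology

variable {X : Type*} [TopologicalSpace X]

lemma mtRel_equivalence (e : Equiv.Perm X) : Equivalence (mtRel e) := by
  constructor
  · intro p; exact ⟨0, by simp, by simp⟩
  · rintro p q ⟨n, h1, h2⟩
    refine ⟨-n, by rw [h1]; push_cast; ring, ?_⟩
    rw [h2, ← Equiv.Perm.mul_apply, ← zpow_add]; simp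
  · rintro p q r ⟨n, h1, h2⟩ ⟨m, h3, h4⟩
    refine ⟨n + m, by rw [h3, h1]; push_cast; ring, ?_⟩
    rw [h4, h2, ← Equiv.Perm.mul_apply, ← zpow_add, add_comm]

lemma mtMk_eq_iff (e : Equiv.Perm X) {p q : ℝ × X} :
    mtMk e p = mtMk e q ↔ mtRel e p q :=
  (Quot.eq).trans ((mtRel_equivalence e).eqvGen_iff)

lemma surjective_mtMk (e : Equiv.Perm X) : Function.Surjective (mtMk e) :=
  fun m => Quot.inductionOn m fun p => ⟨p, rfl⟩

lemma continuous_mtMk (e : Equiv.Perm X) : Continuous (mtMk e) :=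
  continuous_quot_mk

lemma isOpenMap_mtMk (φ : X ≃ₜ X) : IsOpenMap (mtMk φ.toEquiv) := by
  intro U hU
  have heq : mtMk φ.toEquiv ⁻¹' (mtMk φ.toEquiv '' U)
      = ⋃ n : ℤ, (fun p : ℝ × X => (p.1 + (n:ℝ), pz φ (-n) p.2)) ⁻¹' U := by
    ext p
    simp only [mem_preimage, mem_image, mem_iUnion]
    constructor
    · rintro ⟨u, hu, hequ⟩
      obtain ⟨n, h1, h2⟩ := (mtMk_eq_iff φ.toEquiv).mp hequ
      refine ⟨n, ?_⟩
      have hu1 : u.1 = p.1 + (n:ℝ) := by rw [h1]; ring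
      have hu2 : u.2 = pz φ (-n) p.2 := by
        rw [h2, show ((φ.toEquiv ^ n) u.2) = pz φ n u.2 from rfl, ← pz_add]
        simp [pz_zero]
      have : ((p.1 + (n:ℝ), pz φ (-n) p.2) : ℝ × X) = u := by
        rw [← hu1, ← hu2]
      rw [this]; exact hu
    · rintro ⟨n, hn⟩
      refine ⟨(p.1 + (n:ℝ), pz φ (-n) p.2), hn, ?_⟩
      refine (mtMk_eq_iff φ.toEquiv).mpr ⟨n, by simp, ?_⟩
      show p.2 = pz φ n (pz φ (-n) p.2)
      rw [← pz_add]; simp [pz_zero]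
  have hopen : IsOpen (mtMk φ.toEquiv ⁻¹' (mtMk φ.toEquiv '' U)) := by
    rw [heq]
    refine isOpen_iUnion fun n => hU.preimage ?_
    exact (continuous_fst.add continuous_const).prodMk ((contZpow φ (-n)).comp continuous_snd)
  exact (isQuotientMap_quot_mk.isOpen_preimage).mp hopen

lemma isQuotientMap_mtMk (φ : X ≃ₜ X) : IsQuotientMap (mtMk φ.toEquiv) :=
  (isOpenMap_mtMk φ).isQuotientMap (continuous_mtMk _) (surjective_mtMk _)

lemma isQuotientMap_idMk (φ : X ≃ₜ X) :
    IsQuotientMap (Prod.map (id : ℝ → ℝ) (mtMk φ.toEquiv)) :=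
  (IsOpenMap.id.prodMap (isOpenMap_mtMk φ)).isQuotientMap
    (continuous_id.prodMap (continuous_mtMk _))
    (Function.surjective_id.prodMap (surjective_mtMk _))

/-- The `n`-th power of `φ` as a homeomorphism. -/
def zpowHomeo (φ : X ≃ₜ X) (n : ℤ) : X ≃ₜ X where
  toEquiv := φ.toEquiv ^ n
  continuous_toFun := contZpow φ n
  continuous_invFun := by
    show Continuous ⇑(φ.toEquiv ^ n).symm
    have h : ⇑(φ.toEquiv ^ n).symm = pz φ (-n) := by
      funext x
      rw [pz, zpow_neg, ← Equiv.Perm.inv_def]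
    rw [h]; exact contZpow φ (-n)

lemma main_rational {S : Type*} [TopologicalSpace S] [MeasurableSpace S] [BorelSpace S]
    [CompactSpace S] (μ : Measure S) [IsProbabilityMeasure μ] (φ : S ≃ₜ S)
    (hφμ : MeasurePreserving (⇑φ) μ μ)
    (hrat : ∀ (f : C(MappingTorus φ.toEquiv, Circ)) (r : ℝ),
      AsympPair φ.toEquiv μ f r → ∃ q : ℚ, r = (q : ℝ))
    (Φ : IdentityIsotopy φ) (f : C(S, Circ)) (r : ℝ) (hRP : RotPair Φ μ f r) :
    ∃ q : ℚ, r = (q : ℝ) := by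
  obtain ⟨g, ⟨G, hG, hG0, hGl, hg1⟩, hr⟩ := hRP
  have hg : Continuous g := by
    have h : g = fun x => G (1, x) := funext hg1
    rw [h]; exact hG.comp (continuous_const.prodMk continuous_id)
  have hgf : ∀ x, ((g x : ℝ) : Circ) = f (φ x) - f x := fun x => by
    rw [hg1 x, hGl 1 x, Φ.map_one]
  have hGE : Continuous (Gext φ g G) := Gext_cont φ hG hG0 hg1
  have hpzpz : ∀ (n : ℤ) (x : S), pz φ (-n) (pz φ n x) = x := by
    intro n x; rw [← pz_add]; simp [pz_zero]
  have hshift : ∀ (p : ℝ × S) (n : ℤ),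
      Gext φ g G (p.1 + ((-n : ℤ) : ℝ), pz φ n p.2)
        = Sg φ g (-n) (pz φ n p.2) + Gext φ g G p := by
    intro p n
    have h2 := Gext_shift φ g G p.1 (-n) (pz φ n p.2)
    rw [hpzpz n p.2] at h2
    simpa using h2
  -- the induced circle-valued function on the mapping torus
  have hwd1 : ∀ p q : ℝ × S, mtRel φ.toEquiv p q →
      ((Gext φ g G p : ℝ) : Circ) + f p.2 = ((Gext φ g G q : ℝ) : Circ) + f q.2 := by
    rintro p q ⟨n, h1, h2⟩
    have hqp : q = (p.1 + ((-n : ℤ) : ℝ), pz φ n p.2) :=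
      Prod.ext (by rw [h1]; push_cast; ring) h2
    rw [hqp]
    show ((Gext φ g G p : ℝ) : Circ) + f p.2
        = ((Gext φ g G (p.1 + ((-n : ℤ) : ℝ), pz φ n p.2) : ℝ) : Circ) + f (pz φ n p.2)
    rw [hshift p n, MTaux2.coe_add, MTaux2.Sg_cast φ g f hgf, hpzpz n p.2]
    abel
  set fh : C(MappingTorus φ.toEquiv, Circ) :=
    { toFun := Quot.lift (fun p : ℝ × S => ((Gext φ g G p : ℝ) : Circ) + f p.2) hwd1
      continuous_toFun := by
        apply (isQuotientMap_mtMk φ).continuous_iff.mpr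
        exact ((AddCircle.continuous_mk' 1).comp hGE).add
          (f.continuous.comp continuous_snd) } with hfh_def
  -- the lift of the suspension cocycle
  have hwd2 : ∀ s : ℝ, ∀ p q : ℝ × S, mtRel φ.toEquiv p q →
      Gext φ g G (p.1 + s, p.2) - Gext φ g G p
        = Gext φ g G (q.1 + s, q.2) - Gext φ g G q := by
    intro s p q hpq
    obtain ⟨n, h1, h2⟩ := hpq
    have hqp : q = (p.1 + ((-n : ℤ) : ℝ), pz φ n p.2) :=
      Prod.ext (by rw [h1]; push_cast; ring) h2
    rw [hqp]
    show _ = Gext φ g G ((p.1 + ((-n : ℤ) : ℝ)) + s, pz φ n p.2)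
        - Gext φ g G (p.1 + ((-n : ℤ) : ℝ), pz φ n p.2)
    rw [show (p.1 + ((-n : ℤ) : ℝ)) + s = (p.1 + s) + ((-n : ℤ) : ℝ) by ring]
    rw [show Gext φ g G ((p.1 + s) + ((-n : ℤ) : ℝ), pz φ n p.2)
        = Sg φ g (-n) (pz φ n p.2) + Gext φ g G (p.1 + s, p.2) from hshift (p.1 + s, p.2) n]
    rw [hshift p n]
    ring
  set Gh : ℝ × MappingTorus φ.toEquiv → ℝ := fun sm =>
    Quot.liftOn sm.2 (fun p => Gext φ g G (p.1 + sm.1, p.2) - Gext φ g G p) (hwd2 sm.1)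
    with hGh_def
  have hGh : Continuous Gh := by
    rw [(isQuotientMap_idMk φ).continuous_iff]
    show Continuous fun sp : ℝ × (ℝ × S) =>
      Gext φ g G (sp.2.1 + sp.1, sp.2.2) - Gext φ g G sp.2
    exact (hGE.comp (((continuous_fst.comp continuous_snd).add continuous_fst).prodMk
      (continuous_snd.comp continuous_snd))).sub (hGE.comp continuous_snd)
  have hGh0 : ∀ m, Gh (0, m) = 0 := by
    intro m
    induction m using Quot.inductionOn with
    | _ p =>
      show Gext φ g G (p.1 + 0, p.2) - Gext φ g G p = 0
      rw [show ((p.1 + 0 : ℝ), p.2) = p from Prod.ext (add_zero p.1) rfl, sub_self]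
  have hGhl : ∀ s m, ((Gh (s, m) : ℝ) : Circ) = fh (suspFlow φ.toEquiv s m) - fh m := by
    intro s m
    induction m using Quot.inductionOn with
    | _ p =>
      show ((Gext φ g G (p.1 + s, p.2) - Gext φ g G p : ℝ) : Circ)
        = (((Gext φ g G (p.1 + s, p.2) : ℝ) : Circ) + f p.2)
          - (((Gext φ g G p : ℝ) : Circ) + f p.2)
      rw [MTaux2.coe_sub]; abel
  -- measure computations
  set ν₀ : Measure (ℝ × S) := (volume.restrict (Ico (0 : ℝ) 1)).prod μ with hν₀_def
  haveI hprob1 : IsProbabilityMeasure (volume.restrict (Ico (0 : ℝ) 1)) := by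
    constructor
    rw [Measure.restrict_apply MeasurableSet.univ, univ_inter, Real.volume_Ico]
    norm_num
  haveI hprobν : IsProbabilityMeasure ν₀ := by
    rw [hν₀_def]; infer_instance
  have hmk_meas : AEMeasurable (mtMk φ.toEquiv) ν₀ :=
    (continuous_mtMk φ.toEquiv).measurable.aemeasurable
  have hint : ∀ s : ℝ, ∫ m, Gh (s, m) ∂(mtMeasure φ.toEquiv μ)
      = ∫ p, (Gext φ g G (p.1 + s, p.2) - Gext φ g G p) ∂ν₀ := by
    intro s
    have hmeq : mtMeasure φ.toEquiv μ = Measure.map (mtMk φ.toEquiv) ν₀ := rfl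
    have hasm : AEStronglyMeasurable (fun m => Gh (s, m))
        (Measure.map (mtMk φ.toEquiv) ν₀) :=
      ((hGh.comp (continuous_const.prodMk continuous_id)).measurable).stronglyMeasurable.aestronglyMeasurable
    rw [hmeq, integral_map hmk_meas hasm]
    rfl
  have hae : ∀ᵐ p ∂ν₀, p.1 ∈ Ico (0 : ℝ) 1 := by
    rw [ae_iff]
    have hset : {p : ℝ × S | ¬ p.1 ∈ Ico (0 : ℝ) 1} = (Ico (0 : ℝ) 1)ᶜ ×ˢ univ := by
      ext p; simp
    rw [hν₀_def, hset, Measure.prod_prod, Measure.restrict_apply measurableSet_Ico.compl]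
    simp
  obtain ⟨C, hC⟩ := ((isCompact_Icc : IsCompact (Icc (0:ℝ) 2)).prod
    isCompact_univ).exists_bound_of_continuousOn hGE.continuousOn
  have hbound : ∀ τ ∈ Icc (0 : ℝ) 1, |∫ p, Gext φ g G (p.1 + τ, p.2) ∂ν₀| ≤ C := by
    intro τ hτ
    have h1 : ∀ᵐ p ∂ν₀, ‖Gext φ g G (p.1 + τ, p.2)‖ ≤ C := by
      filter_upwards [hae] with p hp
      exact hC _ (Set.mem_prod.mpr ⟨⟨show (0:ℝ) ≤ p.1 + τ by
        have h1 := hp.1; have h2 := hτ.1; linarith,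
        show p.1 + τ ≤ 2 by
        have h1 := hp.2; have h2 := hτ.2; linarith⟩,
        mem_univ _⟩)
    have h2 := norm_integral_le_of_norm_le_const h1
    simpa using h2
  have hIntSg : ∀ n : ℤ, Integrable (fun p : ℝ × S => Sg φ g n p.2) ν₀ := by
    intro n
    obtain ⟨D, hD⟩ := isCompact_univ.exists_bound_of_continuousOn (Sg_cont φ hg n).continuousOn
    exact Integrable.mono' (integrable_const D)
      ((Sg_cont φ hg n).comp continuous_snd).aestronglyMeasurable
      (ae_of_all _ fun p => hD p.2 (mem_univ _))
  have hInt2 : ∀ τ ∈ Icc (0:ℝ) 1, ∀ n : ℤ,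
      Integrable (fun p : ℝ × S => Gext φ g G (p.1 + τ, pz φ n p.2)) ν₀ := by
    intro τ hτ n
    refine Integrable.mono' (integrable_const C) ?_ ?_
    · exact (hGE.comp ((continuous_fst.add continuous_const).prodMk
        ((contZpow φ n).comp continuous_snd))).aestronglyMeasurable
    · filter_upwards [hae] with p hp
      exact hC _ (Set.mem_prod.mpr ⟨⟨show (0:ℝ) ≤ p.1 + τ by
        have h1 := hp.1; have h2 := hτ.1; linarith,
        show p.1 + τ ≤ 2 by
        have h1 := hp.2; have h2 := hτ.2; linarith⟩,
        mem_univ _⟩)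
  have hInt2' : ∀ τ ∈ Icc (0:ℝ) 1,
      Integrable (fun p : ℝ × S => Gext φ g G (p.1 + τ, p.2)) ν₀ := by
    intro τ hτ
    refine Integrable.mono' (integrable_const C) ?_ ?_
    · exact (hGE.comp ((continuous_fst.add continuous_const).prodMk
        continuous_snd)).aestronglyMeasurable
    · filter_upwards [hae] with p hp
      exact hC _ (Set.mem_prod.mpr ⟨⟨show (0:ℝ) ≤ p.1 + τ by
        have h1 := hp.1; have h2 := hτ.1; linarith,
        show p.1 + τ ≤ 2 by
        have h1 := hp.2; have h2 := hτ.2; linarith⟩,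
        mem_univ _⟩)
  have hfracmem : ∀ s : ℝ, Int.fract s ∈ Icc (0:ℝ) 1 :=
    fun s => ⟨Int.fract_nonneg s, (Int.fract_lt_one s).le⟩
  have hzeromem : (0:ℝ) ∈ Icc (0:ℝ) 1 := ⟨le_refl 0, zero_le_one⟩
  have hintSp : ∀ n : ℤ, ∫ p, Sg φ g n p.2 ∂ν₀ = (n : ℝ) * r := by
    intro n
    have hmap : Measure.map (Prod.snd : ℝ × S → S) ν₀ = μ := by
      rw [hν₀_def, Measure.map_snd_prod]
      simp
    have hs : AEStronglyMeasurable (Sg φ g n) (Measure.map (Prod.snd : ℝ × S → S) ν₀) := by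
      rw [hmap]; exact (Sg_cont φ hg n).aestronglyMeasurable
    calc ∫ p, Sg φ g n p.2 ∂ν₀
        = ∫ x, Sg φ g n x ∂(Measure.map (Prod.snd : ℝ × S → S) ν₀) :=
          (integral_map measurable_snd.aemeasurable hs).symm
      _ = ∫ x, Sg φ g n x ∂μ := by rw [hmap]
      _ = (n : ℝ) * r := by rw [MTaux2.Sg_integral φ hg μ hφμ n, hr]
  have hintshift : ∀ (τ : ℝ) (n : ℤ),
      ∫ p, Gext φ g G (p.1 + τ, pz φ n p.2) ∂ν₀
        = ∫ p, Gext φ g G (p.1 + τ, p.2) ∂ν₀ := by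
    intro τ n
    have hmp : MeasurePreserving (Prod.map (id : ℝ → ℝ) (pz φ n)) ν₀ ν₀ := by
      rw [hν₀_def]
      exact (MeasurePreserving.id _).prod (MTaux2.mp_pz φ hφμ n)
    have hembn : MeasurableEmbedding (pz φ n) := by
      have h := (zpowHomeo φ n).toMeasurableEquiv.measurableEmbedding
      rwa [Homeomorph.toMeasurableEquiv_coe] at h
    have hemb : MeasurableEmbedding (Prod.map (id : ℝ → ℝ) (pz φ n)) :=
      MeasurableEmbedding.id.prodMap hembn
    calc ∫ p, Gext φ g G (p.1 + τ, pz φ n p.2) ∂ν₀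
        = ∫ p, (fun q : ℝ × S => Gext φ g G (q.1 + τ, q.2))
            (Prod.map (id : ℝ → ℝ) (pz φ n) p) ∂ν₀ := rfl
      _ = ∫ q, Gext φ g G (q.1 + τ, q.2) ∂ν₀ :=
          hmp.integral_comp hemb (fun q : ℝ × S => Gext φ g G (q.1 + τ, q.2))
  have hsdec : ∀ (s : ℝ) (p : ℝ × S), Gext φ g G (p.1 + s, p.2)
      = Sg φ g ⌊s⌋ p.2 + Gext φ g G (p.1 + Int.fract s, pz φ ⌊s⌋ p.2) := by
    intro s p
    have h2 := Gext_shift φ g G (p.1 + Int.fract s) ⌊s⌋ p.2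
    rwa [show (p.1 + Int.fract s) + (⌊s⌋ : ℝ) = p.1 + s by
      rw [add_assoc, Int.fract_add_floor]] at h2
  have hJ : ∀ s : ℝ, ∫ m, Gh (s, m) ∂(mtMeasure φ.toEquiv μ)
      = (⌊s⌋ : ℝ) * r + (∫ p, Gext φ g G (p.1 + Int.fract s, p.2) ∂ν₀
          - ∫ p, Gext φ g G (p.1 + 0, p.2) ∂ν₀) := by
    intro s
    rw [hint s]
    have h1 : ∀ p : ℝ × S, Gext φ g G (p.1 + s, p.2) - Gext φ g G p
        = Sg φ g ⌊s⌋ p.2 + (Gext φ g G (p.1 + Int.fract s, pz φ ⌊s⌋ p.2)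
            - Gext φ g G (p.1 + 0, p.2)) := by
      intro p
      rw [hsdec s p, show ((p.1 + 0 : ℝ), p.2) = p from Prod.ext (add_zero p.1) rfl]
      ring
    have hsub : Integrable (fun p : ℝ × S =>
        Gext φ g G (p.1 + Int.fract s, pz φ ⌊s⌋ p.2) - Gext φ g G (p.1 + 0, p.2)) ν₀ :=
      (hInt2 _ (hfracmem s) ⌊s⌋).sub (hInt2' 0 hzeromem)
    rw [integral_congr_ae (ae_of_all _ h1),
      integral_add (hIntSg ⌊s⌋) hsub,
      integral_sub (hInt2 _ (hfracmem s) ⌊s⌋) (hInt2' 0 hzeromem),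
      hintSp ⌊s⌋, hintshift (Int.fract s) ⌊s⌋]
  have htend : Tendsto (fun s : ℝ =>
      (∫ m, Gh (s, m) ∂(mtMeasure φ.toEquiv μ)) / s) atTop (nhds r) := by
    set J := fun s : ℝ => ∫ m, Gh (s, m) ∂(mtMeasure φ.toEquiv μ) with hJdef
    have hJb : ∀ s : ℝ, |J s - (⌊s⌋ : ℝ) * r| ≤ 2 * C := by
      intro s
      simp only [hJdef]
      rw [hJ s, add_sub_cancel_left]
      calc |∫ p, Gext φ g G (p.1 + Int.fract s, p.2) ∂ν₀
            - ∫ p, Gext φ g G (p.1 + 0, p.2) ∂ν₀|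
          ≤ |∫ p, Gext φ g G (p.1 + Int.fract s, p.2) ∂ν₀|
            + |∫ p, Gext φ g G (p.1 + 0, p.2) ∂ν₀| := abs_sub _ _
        _ ≤ C + C := add_le_add (hbound _ (hfracmem s)) (hbound 0 hzeromem)
        _ = 2 * C := by ring
    have h0 : Tendsto (fun s : ℝ => J s / s - r) atTop (nhds 0) := by
      apply squeeze_zero_norm' (a := fun s : ℝ => (2 * C + |r|) / s)
      · filter_upwards [eventually_ge_atTop (1 : ℝ)] with s hs
        have hs0 : (0 : ℝ) < s := by linarith
        have h1 : J s / s - r = (J s - s * r) / s := by field_simp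
        rw [h1, Real.norm_eq_abs, abs_div, abs_of_pos hs0]
        have h4 : |(⌊s⌋ : ℝ) * r - s * r| ≤ |r| := by
          rw [show (⌊s⌋ : ℝ) * r - s * r = ((⌊s⌋ : ℝ) - s) * r by ring, abs_mul]
          have h5 : |(⌊s⌋ : ℝ) - s| ≤ 1 := by
            rw [abs_sub_comm, Int.self_sub_floor, abs_of_nonneg (Int.fract_nonneg s)]
            exact (Int.fract_lt_one s).le
          calc |(⌊s⌋ : ℝ) - s| * |r| ≤ 1 * |r| :=
                mul_le_mul_of_nonneg_right h5 (abs_nonneg r)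
            _ = |r| := one_mul _
        have h2 : |J s - s * r| ≤ 2 * C + |r| := by
          calc |J s - s * r| = |(J s - (⌊s⌋ : ℝ) * r) + ((⌊s⌋ : ℝ) * r - s * r)| := by
                ring_nf
            _ ≤ |J s - (⌊s⌋ : ℝ) * r| + |(⌊s⌋ : ℝ) * r - s * r| := abs_add_le _ _
            _ ≤ 2 * C + |r| := add_le_add (hJb s) h4
        gcongr
      · exact Tendsto.div_atTop tendsto_const_nhds tendsto_id
    have h1 := h0.add (tendsto_const_nhds : Tendsto (fun _ : ℝ => r) atTop (nhds r))
    simpa using h1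
  exact hrat fh r ⟨Gh, hGh, hGh0, hGhl, htend⟩

end MTaux3

/-- **Lemma.**  Let `S` be a closed oriented surface of genus at least `2` with
smooth area form `ω` (normalized measure `μ`), and let `φ ∈ Homeo₀(S, ω)`.  If the
asymptotic cycle satisfies `C(φ) ∈ H₁(M_φ; ℚ)`, then the rotation vector satisfies
`F(φ) ∈ H₁(S; ℚ)`; in particular `φ` has rational rotation direction. -/
theorem rational_asymptotic_cycle_implies_rational_rotation_vector
    (S : Type*) [TopologicalSpace S] [MeasurableSpace S] [BorelSpace S]
    (g : ℕ) (hgen : IsClosedSurfaceOfGenus S g) (hg : 2 ≤ g)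
    (μ : Measure S) [IsProbabilityMeasure μ] [NullSingletonClass μ]
    (hμpos : ∀ U : Set S, IsOpen U → U.Nonempty → 0 < μ U)
    (φ : S ≃ₜ S)
    -- `φ ∈ Homeo₀(S, ω)` :
    (hmem : ∃ Ψ : IdentityIsotopy φ, ∀ t : ℝ, MeasurePreserving (Ψ.φt t) μ μ)
    -- `C(φ) ∈ H₁(M_φ; ℚ)` :
    (hrat : ∀ (f : C(MappingTorus φ.toEquiv, Circ)) (r : ℝ),
      AsympPair φ.toEquiv μ f r → ∃ q : ℚ, r = (q : ℝ)) :
    -- `F(φ) ∈ H₁(S; ℚ)` (for genus `≥ 2` the rotation vector is independent of `Φ`) :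
    (∀ (Φ : IdentityIsotopy φ) (f : C(S, Circ)) (r : ℝ),
      RotPair Φ μ f r → ∃ q : ℚ, r = (q : ℝ)) ∧
    -- in particular, `φ` has rational rotation direction :
    (∃ c : ℝ, 0 < c ∧ ∀ (Φ : IdentityIsotopy φ) (f : C(S, Circ)) (r : ℝ),
      RotPair Φ μ f r → ∃ q : ℚ, c * r = (q : ℝ)) := by
  obtain ⟨hcomp, -, -, -, -⟩ := hgen
  haveI : CompactSpace S := hcomp
  obtain ⟨Ψ, hΨ⟩ := hmem
  have hφμ : MeasurePreserving (⇑φ) μ μ := by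
    have h := hΨ 1
    rwa [Ψ.map_one] at h
  have main : ∀ (Φ : IdentityIsotopy φ) (f : C(S, Circ)) (r : ℝ),
      RotPair Φ μ f r → ∃ q : ℚ, r = (q : ℝ) :=
    fun Φ f r hRP => MTaux3.main_rational μ φ hφμ hrat Φ f r hRP
  refine ⟨main, 1, one_pos, fun Φ f r hRP => ?_⟩
  obtain ⟨q, hq⟩ := main Φ f r hRP
  exact ⟨q, by rw [one_mul, hq]⟩

end
end
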